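/- Let $k_0(n) = \lfloor n\,(\ln 5 - \ln 3)/(\ln 5 - \ln 2)\rfloor$. Then for all sufficiently large $n$, $\sum_{k=0}^{k_0(n)} \binom{n}{k} (3/4)^k (3/10)^{n-k} \le 1.05^n \cdot \exp\bigl(-2\,(5/7 - 0.5575)^2\, n\bigr)$, and consequently this sum tends to $0$ as $n \to \infty$. -/

import Mathlib

open Filter

/-- Threshold separating losing from winning numbers of heads in Elsberg's game. -/
noncomputable def k0 (n : ℕ) : ℕ :=
  ⌊(n : ℝ) * (Real.log 5 - Real.log 3) / (Real.log 5 - Real.log 2)⌋₊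

/-!
The summand is `1.05 ^ n` times the `Bin(n, 5/7)` weight of `k`, and `k0 n ≤ 0.5575 n` with
`0.5575 < 5/7`, so the sum is `1.05 ^ n` times a lower tail of that binomial law. Exponential
tilting together with Hoeffding's lemma for a Bernoulli variable bounds such a tail by
`exp (-2 (5/7 - 0.5575) ^ 2 n)`, and `1.05 * exp (-2 (5/7 - 0.5575) ^ 2) < 1` gives the limit.
-/

open Real Finset ProbabilityTheory MeasureTheory

lemma bernoulli_mgf_le_exp {p : ℝ} (hp : p ∈ Set.Icc 0 1) (t : ℝ) :
    p * exp t + (1 - p) ≤ exp (t * p + t ^ 2 / 8) := by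
  set μ : Measure ℝ := Ber(1, 0, ⟨p, hp⟩)
  have hoeffding := (hasSubgaussianMGF_of_mem_Icc (X := id) (μ := μ) (a := 0) (b := 1)
    measurable_id.aemeasurable (by rw [ae_iff]; simp [μ, bernoulliMeasure_def])).mgf_le t
  simp only [mgf, μ, integral_bernoulliMeasure] at hoeffding
  norm_num at hoeffding
  calc p * exp t + (1 - p)
      = exp (t * p) * (p * exp (t * (1 - p)) + (1 - p) * exp (-(t * p))) := by
        rw [mul_add, mul_left_comm, ← exp_add, mul_left_comm, ← exp_add, add_neg_cancel, exp_zero,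
          mul_one, show t * p + t * (1 - p) = t by ring]
    _ ≤ exp (t * p) * exp (t ^ 2 / 8) := by gcongr; exact hoeffding.trans_eq (by ring_nf)
    _ = exp (t * p + t ^ 2 / 8) := (exp_add _ _).symm

lemma sum_binomial_range_le_exp_mul {n m : ℕ} (hmn : m ≤ n) {p x t : ℝ} (hp : p ∈ Set.Icc 0 1)
    (hmx : (m : ℝ) ≤ x) (ht : 0 ≤ t) :
    ∑ k ∈ range (m + 1), (n.choose k : ℝ) * p ^ k * (1 - p) ^ (n - k)
      ≤ exp (t * x) * (p * exp (-t) + (1 - p)) ^ n := by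
  obtain ⟨hp0, hp1⟩ := hp
  have hq : 0 ≤ 1 - p := sub_nonneg.2 hp1
  calc ∑ k ∈ range (m + 1), (n.choose k : ℝ) * p ^ k * (1 - p) ^ (n - k)
      ≤ ∑ k ∈ range (m + 1), (n.choose k : ℝ) * p ^ k * (1 - p) ^ (n - k) * exp (t * (x - k)) := by
        refine sum_le_sum fun k hk => le_mul_of_one_le_right (by positivity) (one_le_exp ?_)
        have : (k : ℝ) ≤ m := by exact_mod_cast mem_range_succ_iff.1 hk
        exact mul_nonneg ht (by linarith)
    _ ≤ ∑ k ∈ range (n + 1), (n.choose k : ℝ) * p ^ k * (1 - p) ^ (n - k) * exp (t * (x - k)) :=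
        sum_le_sum_of_subset_of_nonneg (range_subset_range.2 (by omega))
          fun _ _ _ => by positivity
    _ = exp (t * x) * (p * exp (-t) + (1 - p)) ^ n := by
        rw [add_pow, mul_sum]
        refine sum_congr rfl fun k _ => ?_
        rw [mul_pow, ← exp_nat_mul, show t * (x - k) = t * x + k * -t by ring, exp_add]
        ring

theorem sum_binomial_range_le_exp {n m : ℕ} {p a : ℝ} (hp : p ∈ Set.Icc 0 1) (hap : a ≤ p)
    (hm : (m : ℝ) ≤ a * n) :
    ∑ k ∈ range (m + 1), (n.choose k : ℝ) * p ^ k * (1 - p) ^ (n - k)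
      ≤ exp (-2 * (p - a) ^ 2 * n) := by
  have hmn : m ≤ n := by
    have : a * n ≤ 1 * n := by gcongr; exact hap.trans hp.2
    exact_mod_cast hm.trans (this.trans_eq (one_mul _))
  have hq : 0 ≤ 1 - p := sub_nonneg.2 hp.2
  -- Chernoff's bound with the tilt `t = 4 (p - a)` that minimises Hoeffding's exponent
  calc _ ≤ exp (4 * (p - a) * (a * n)) * (p * exp (-(4 * (p - a))) + (1 - p)) ^ n :=
        sum_binomial_range_le_exp_mul hmn hp hm (by linarith)
    _ ≤ exp (4 * (p - a) * (a * n)) * exp (-(4 * (p - a)) * p + (-(4 * (p - a))) ^ 2 / 8) ^ n := by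
        have hp0 := hp.1
        gcongr
        exact bernoulli_mgf_le_exp hp _
    _ = exp (-2 * (p - a) ^ 2 * n) := by
        rw [← exp_nat_mul, ← exp_add]; ring_nf

lemma mul_pow_mul_mul_pow_sub {M : Type*} [CommMonoid M] (c x y : M) {k n : ℕ} (hk : k ≤ n) :
    (c * x) ^ k * (c * y) ^ (n - k) = c ^ n * (x ^ k * y ^ (n - k)) := by
  rw [mul_pow, mul_pow, mul_mul_mul_comm, pow_mul_pow_sub c hk]

-- `0.5575 = 223/400`, and after exponentiating the claim reads `5 ^ 177 * 2 ^ 223 ≤ 3 ^ 400`.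
lemma log_ratio_le : (log 5 - log 3) / (log 5 - log 2) ≤ 0.5575 := by
  have hpow : (5 : ℝ) ^ 177 * 2 ^ 223 ≤ 3 ^ 200 * 3 ^ 200 := by norm_num
  have hlog := log_le_log (by positivity) hpow
  rw [log_mul (by positivity) (by positivity), log_mul (by positivity) (by positivity),
    log_pow, log_pow, log_pow] at hlog
  have h25 : log 2 < log 5 := log_lt_log (by norm_num) (by norm_num)
  rw [div_le_iff₀ (by linarith)]
  push_cast at hlog
  linarith

lemma k0_le (n : ℕ) : (k0 n : ℝ) ≤ 0.5575 * n := by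
  have h35 : log 3 ≤ log 5 := log_le_log (by norm_num) (by norm_num)
  have h25 : log 2 < log 5 := log_lt_log (by norm_num) (by norm_num)
  calc (k0 n : ℝ) ≤ n * (log 5 - log 3) / (log 5 - log 2) :=
        Nat.floor_le (by apply div_nonneg <;> nlinarith)
    _ = (log 5 - log 3) / (log 5 - log 2) * n := by ring
    _ ≤ 0.5575 * n := by gcongr; exact log_ratio_le

lemma k0_le_self (n : ℕ) : k0 n ≤ n := by
  have h : (k0 n : ℝ) ≤ n := (k0_le n).trans (by linarith [(n.cast_nonneg : (0 : ℝ) ≤ n)])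
  exact_mod_cast h

lemma mul_exp_neg_two_mul_sq_lt_one : 1.05 * exp (-2 * (5 / 7 - 0.5575) ^ 2) < 1 := by
  have hc : (0 : ℝ) ≤ 2 * (5 / 7 - 0.5575) ^ 2 := by positivity
  have := quadratic_le_exp_of_nonneg hc
  rw [neg_mul, exp_neg, ← div_eq_mul_inv, div_lt_one (exp_pos _)]
  norm_num at this ⊢
  linarith

theorem losing_sum_hoeffding_bound :
    (∀ᶠ n : ℕ in atTop,
      (∑ k ∈ Finset.range (k0 n + 1), (n.choose k : ℝ) * (3/4)^k * (3/10)^(n-k))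
        ≤ (1.05 : ℝ)^n * Real.exp (-2 * (5/7 - 0.5575)^2 * n)) ∧
    Tendsto
      (fun n : ℕ => ∑ k ∈ Finset.range (k0 n + 1), (n.choose k : ℝ) * (3/4)^k * (3/10)^(n-k))
      atTop (nhds 0) := by
  have hbound (n : ℕ) :
      ∑ k ∈ range (k0 n + 1), (n.choose k : ℝ) * (3/4)^k * (3/10)^(n-k)
        ≤ (1.05 : ℝ)^n * exp (-2 * (5/7 - 0.5575)^2 * n) := by
    have hrescale : ∑ k ∈ range (k0 n + 1), (n.choose k : ℝ) * (3/4)^k * (3/10)^(n-k)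
        = 1.05 ^ n * ∑ k ∈ range (k0 n + 1), (n.choose k : ℝ) * (5/7)^k * (1 - 5/7)^(n-k) := by
      rw [mul_sum]
      refine sum_congr rfl fun k hk => ?_
      have hkn : k ≤ n := (mem_range_succ_iff.1 hk).trans (k0_le_self n)
      rw [show (3/4 : ℝ) = 1.05 * (5/7) by norm_num, show (3/10 : ℝ) = 1.05 * (1 - 5/7) by norm_num,
        mul_assoc, mul_pow_mul_mul_pow_sub _ _ _ hkn]
      ring
    rw [hrescale]
    gcongr
    exact sum_binomial_range_le_exp (by norm_num) (by norm_num) (k0_le n)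
  refine ⟨Eventually.of_forall hbound,
    squeeze_zero (fun n => sum_nonneg fun k _ => by positivity) hbound ?_⟩
  simp_rw [mul_comm _ ((_ : ℕ) : ℝ), exp_nat_mul, ← mul_pow]
  exact tendsto_pow_atTop_nhds_zero_of_lt_one (by positivity) mul_exp_neg_two_mul_sq_lt_one
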